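/- Let H be a host graph. In the global edge-buying setting: (i) for every Greedy Equilibrium s, the graph G(s) is an inclusion minimal terminal spanner of H; and (ii) for every inclusion minimal terminal spanner G of H, there exists a Greedy Equilibrium s with G(s) = G. -/

import Mathlib

namespace TNCG

/-- A time edge: an undirected edge together with a time label. -/
abbrev TimeEdge (V : Type) := Sym2 V × ℕ

/-- A temporal host graph with terminals: the underlying graph is complete, every
(non-loop) edge carries a nonempty finite set of time labels, and there is a
nonempty set of terminal nodes. -/
structure HostGraph (V : Type) [Fintype V] [DecidableEq V] where
  labels : Sym2 V → Finset ℕ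
  labels_nonempty : ∀ e : Sym2 V, ¬ e.IsDiag → (labels e).Nonempty
  labels_diag : ∀ e : Sym2 V, e.IsDiag → labels e = ∅
  terminals : Finset V
  terminals_nonempty : terminals.Nonempty

variable {V : Type} [Fintype V] [DecidableEq V]

/-- Temporal reachability within a set `A` of time edges: `ReachFrom A t u w` holds if
there is a temporal walk from `u` to `w` all of whose labels are `≥ t` and non-decreasing. -/
inductive ReachFrom (A : Finset (TimeEdge V)) : ℕ → V → V → Prop
  | refl (t : ℕ) (v : V) : ReachFrom A t v v
  | step {t : ℕ} {u v w : V} (l : ℕ) (hle : t ≤ l) (he : (s(u, v), l) ∈ A)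
      (htail : ReachFrom A l v w) : ReachFrom A t u w

/-- `u` reaches `w` via a temporal path in the time-edge set `A`. -/
def Reaches (A : Finset (TimeEdge V)) (u w : V) : Prop := ReachFrom A 0 u w

/-- A strategy profile: each agent buys a finite set of time edges. -/
abbrev Profile (V : Type) := V → Finset (TimeEdge V)

/-- The set of time edges of the created graph `G(s)`. -/
def built (s : Profile V) : Finset (TimeEdge V) := Finset.univ.biUnion s

/-- The two edge-buying settings. -/
inductive Setting | loc | glob
deriving DecidableEq

/-- The two equilibrium types. -/
inductive EqType | nash | greedy
deriving DecidableEq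

/-- A time edge of the host graph. -/
def HostGraph.ValidTimeEdge (H : HostGraph V) (p : TimeEdge V) : Prop :=
  p.2 ∈ H.labels p.1

/-- Which strategies are allowed for agent `v` in a given setting: in the local setting all
bought time edges must be incident to `v`; in the global setting there is no restriction. -/
def Allowed (H : HostGraph V) : Setting → V → Finset (TimeEdge V) → Prop
  | Setting.loc, v, S => ∀ p ∈ S, H.ValidTimeEdge p ∧ v ∈ p.1
  | Setting.glob, _, S => ∀ p ∈ S, H.ValidTimeEdge p

open Classical in
/-- The cost of agent `v`: the number of bought time edges plus `C` times the number of
unreached terminals. -/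
noncomputable def cost (H : HostGraph V) (C : ℝ) (s : Profile V) (v : V) : ℝ :=
  ((s v).card : ℝ) + C * ((H.terminals.filter fun t => ¬ Reaches (built s) v t).card : ℝ)

/-- The profile obtained from `s` by replacing `v`'s strategy with `S'`. -/
def update (s : Profile V) (v : V) (S' : Finset (TimeEdge V)) : Profile V :=
  fun u => if u = v then S' else s u

/-- `S'` is obtained from `S` by adding or removing a single time edge. -/
def GreedyDev (S S' : Finset (TimeEdge V)) : Prop :=
  (∃ p, p ∉ S ∧ S' = insert p S) ∨ (∃ p ∈ S, S' = S.erase p)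

/-- `s` is an equilibrium (Nash or Greedy) in the given setting: every strategy is allowed, and
no agent has an (allowed, and for Greedy Equilibria single-time-edge) improving response. -/
def IsEquilibrium (H : HostGraph V) (C : ℝ) (st : Setting) (et : EqType) (s : Profile V) :
    Prop :=
  (∀ v, Allowed H st v (s v)) ∧
    ∀ v S', Allowed H st v S' → (et = EqType.greedy → GreedyDev (s v) S') →
      ¬ cost H C (update s v S') v < cost H C s v

/-- The social cost of a strategy profile. -/
noncomputable def socialCost (H : HostGraph V) (C : ℝ) (s : Profile V) : ℝ :=
  ∑ v, cost H C s v

/-- A social optimum: an allowed strategy profile of minimum social cost. -/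
def IsSocialOptimum (H : HostGraph V) (C : ℝ) (st : Setting) (s : Profile V) : Prop :=
  (∀ v, Allowed H st v (s v)) ∧
    ∀ s' : Profile V, (∀ v, Allowed H st v (s' v)) → socialCost H C s ≤ socialCost H C s'

/-- The lifetime of a host graph: its largest time label. -/
def HostGraph.maxLabel (H : HostGraph V) : ℕ :=
  Finset.univ.sup fun p : V × V => (H.labels s(p.1, p.2)).sup id

/-- The simple graph whose edges are the host edges carrying the maximum label. -/
def maxLabelGraph (H : HostGraph V) : SimpleGraph V where
  Adj u v := u ≠ v ∧ H.maxLabel ∈ H.labels s(u, v)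
  symm := ⟨by
    intro u v h
    exact ⟨Ne.symm h.1, by rw [Sym2.eq_swap]; exact h.2⟩⟩
  loopless := ⟨fun v h => h.1 rfl⟩

/-- The simple graph underlying a set of time edges. -/
def edgesGraph (A : Finset (TimeEdge V)) : SimpleGraph V where
  Adj u v := u ≠ v ∧ ∃ l, (s(u, v), l) ∈ A
  symm := ⟨by
    rintro u v ⟨h, l, hl⟩
    exact ⟨Ne.symm h, l, by rw [Sym2.eq_swap]; exact hl⟩⟩
  loopless := ⟨fun v h => h.1 rfl⟩

/-- A terminal spanner: a valid time-edge set in which every node reaches every terminal. -/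
def IsTerminalSpanner (H : HostGraph V) (A : Finset (TimeEdge V)) : Prop :=
  (∀ p ∈ A, H.ValidTimeEdge p) ∧ ∀ v : V, ∀ t ∈ H.terminals, Reaches A v t

/-- An inclusion minimal terminal spanner. -/
def IsMinimalTerminalSpanner (H : HostGraph V) (A : Finset (TimeEdge V)) : Prop :=
  IsTerminalSpanner H A ∧ ∀ p ∈ A, ¬ IsTerminalSpanner H (A.erase p)

/-- A host graph is simple if every (non-loop) edge carries exactly one time label. -/
def HostGraph.Simple (H : HostGraph V) : Prop :=
  ∀ e : Sym2 V, ¬ e.IsDiag → (H.labels e).card = 1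


lemma reachFrom_mono {A B : Finset (TimeEdge V)} (h : A ⊆ B) {t : ℕ} {u w : V}
    (hr : ReachFrom A t u w) : ReachFrom B t u w := by
  induction hr with
  | refl t v => exact .refl t v
  | step l hle he _ ih => exact .step l hle (h he) ih

lemma reaches_mono {A B : Finset (TimeEdge V)} (h : A ⊆ B) {u w : V}
    (hr : Reaches A u w) : Reaches B u w := reachFrom_mono h hr

lemma mem_built {s : Profile V} {q : TimeEdge V} : q ∈ built s ↔ ∃ u, q ∈ s u := by
  simp [built]

/-- In the global setting: (i) the graph created by any Greedy Equilibrium is an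
inclusion minimal terminal spanner of `H`; (ii) every inclusion minimal terminal spanner of
`H` is created by some Greedy Equilibrium. -/
theorem GE_iff_minimal_terminal_spanner {V : Type} [Fintype V] [DecidableEq V]
    (H : HostGraph V) (C : ℝ) (hC : 1 < C) :
    (∀ s : Profile V, IsEquilibrium H C Setting.glob EqType.greedy s →
      IsMinimalTerminalSpanner H (built s)) ∧
    (∀ A : Finset (TimeEdge V), IsMinimalTerminalSpanner H A →
      ∃ s : Profile V, IsEquilibrium H C Setting.glob EqType.greedy s ∧ built s = A) := by
  classical
  have hCpos : (0:ℝ) < C := lt_trans one_pos hC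
  constructor
  · -- (i) every GE builds a minimal terminal spanner
    rintro s ⟨hallow, hne⟩
    have hvalid : ∀ p ∈ built s, H.ValidTimeEdge p := by
      intro p hp
      obtain ⟨u, hu⟩ := mem_built.mp hp
      exact hallow u p hu
    have hspan : ∀ v : V, ∀ t ∈ H.terminals, Reaches (built s) v t := by
      intro v t ht
      by_contra hnr
      have hvt : v ≠ t := by rintro rfl; exact hnr (ReachFrom.refl 0 v)
      obtain ⟨l, hl⟩ := H.labels_nonempty s(v, t) (by simp [Sym2.mk_isDiag_iff, hvt])
      set p : TimeEdge V := (s(v, t), l) with hp_def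
      have hpb : p ∉ built s := fun hp =>
        hnr (ReachFrom.step l (Nat.zero_le l) hp (ReachFrom.refl l t))
      have hpv : p ∉ s v := fun h => hpb (mem_built.mpr ⟨v, h⟩)
      set S' := insert p (s v) with hS'_def
      have hAll : Allowed H Setting.glob v S' := by
        intro q hq
        rcases Finset.mem_insert.mp hq with rfl | hq
        · exact hl
        · exact hallow v q hq
      apply hne v S' hAll (fun _ => Or.inl ⟨p, hpv, rfl⟩)
      have hsub : built s ⊆ built (update s v S') := by
        intro q hq
        obtain ⟨u, hu⟩ := mem_built.mp hq
        refine mem_built.mpr ⟨u, ?_⟩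
        by_cases h : u = v
        · subst h; simp [update, hS'_def, Finset.mem_insert, hu]
        · simp [update, h, hu]
      have hpB : p ∈ built (update s v S') :=
        mem_built.mpr ⟨v, by simp [update, hS'_def]⟩
      have hreacht : Reaches (built (update s v S')) v t :=
        ReachFrom.step l (Nat.zero_le l) hpB (ReachFrom.refl l t)
      simp only [cost, update, if_pos rfl, eq_self_iff_true, if_true]
      have htF : t ∈ H.terminals.filter fun t' => ¬ Reaches (built s) v t' :=
        Finset.mem_filter.mpr ⟨ht, hnr⟩
      have hsubF : (H.terminals.filter fun t' => ¬ Reaches (built (update s v S')) v t')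
          ⊆ (H.terminals.filter fun t' => ¬ Reaches (built s) v t').erase t := by
        intro t' ht'
        obtain ⟨ht'T, ht'nr⟩ := Finset.mem_filter.mp ht'
        refine Finset.mem_erase.mpr ⟨?_, Finset.mem_filter.mpr ⟨ht'T, ?_⟩⟩
        · rintro rfl; exact ht'nr hreacht
        · exact fun hr => ht'nr (reaches_mono hsub hr)
      have hcard : ((H.terminals.filter fun t' =>
          ¬ Reaches (built (update s v S')) v t').card) + 1 ≤
          (H.terminals.filter fun t' => ¬ Reaches (built s) v t').card := by
        have h1 := Finset.card_le_card hsubF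
        rw [Finset.card_erase_of_mem htF] at h1
        have h2 : 1 ≤ (H.terminals.filter fun t' => ¬ Reaches (built s) v t').card :=
          Finset.card_pos.mpr ⟨t, htF⟩
        omega
      have hcardS' : (S'.card : ℝ) = (s v).card + 1 := by
        rw [hS'_def, Finset.card_insert_of_notMem hpv]; push_cast; ring
      have hcR : ((H.terminals.filter fun t' =>
          ¬ Reaches (built (update s v S')) v t').card : ℝ) + 1 ≤
          ((H.terminals.filter fun t' => ¬ Reaches (built s) v t').card : ℝ) := by
        exact_mod_cast hcard
      rw [hcardS']
      nlinarith [hcR, hCpos]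
    refine ⟨⟨hvalid, hspan⟩, ?_⟩
    -- minimality
    intro p hp hspan'
    obtain ⟨v, hv⟩ := mem_built.mp hp
    set S' := (s v).erase p with hS'_def
    have hAll : Allowed H Setting.glob v S' := fun q hq =>
      hallow v q (Finset.mem_of_mem_erase hq)
    apply hne v S' hAll (fun _ => Or.inr ⟨p, hv, rfl⟩)
    have hsub : (built s).erase p ⊆ built (update s v S') := by
      intro q hq
      obtain ⟨hqp, hqb⟩ := Finset.mem_erase.mp hq
      obtain ⟨u, hu⟩ := mem_built.mp hqb
      refine mem_built.mpr ⟨u, ?_⟩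
      by_cases h : u = v
      · subst h; simp [update, hS'_def, Finset.mem_erase, hqp, hu]
      · simp [update, h, hu]
    have hre : ∀ t ∈ H.terminals, Reaches (built (update s v S')) v t :=
      fun t ht => reaches_mono hsub (hspan'.2 v t ht)
    have hfE : (H.terminals.filter fun t' => ¬ Reaches (built (update s v S')) v t') = ∅ :=
      Finset.filter_eq_empty_iff.mpr (fun t ht h => h (hre t ht))
    simp only [cost, update, if_pos rfl, eq_self_iff_true, if_true, hfE, Finset.card_empty,
      Nat.cast_zero, mul_zero, add_zero]
    have h1 : 1 ≤ (s v).card := Finset.card_pos.mpr ⟨p, hv⟩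
    have hcS' : (S'.card : ℝ) = (s v).card - 1 := by
      rw [hS'_def, Finset.card_erase_of_mem hv, Nat.cast_sub h1, Nat.cast_one]
    rw [hcS']
    have hk : (0:ℝ) ≤ C * ((H.terminals.filter fun t' =>
        ¬ Reaches (built s) v t').card : ℝ) :=
      mul_nonneg hCpos.le (Nat.cast_nonneg _)
    linarith
  · -- (ii) every minimal terminal spanner is built by some GE
    intro A hA
    have hval := hA.1.1
    have : Nonempty V := ⟨H.terminals_nonempty.choose⟩
    have hwit : ∀ p ∈ A, ∃ v : V, ∃ t, t ∈ H.terminals ∧ ¬ Reaches (A.erase p) v t := by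
      intro p hp
      by_contra hcon
      push_neg at hcon
      exact hA.2 p hp ⟨fun q hq => hval q (Finset.mem_of_mem_erase hq),
        fun v t ht => hcon v t ht⟩
    choose! owner tw htw hnr using hwit
    set s : Profile V := fun u => A.filter fun p => owner p = u with hs_def
    have hbuilt : built s = A := by
      ext q
      simp only [mem_built, hs_def, Finset.mem_filter]
      exact ⟨fun ⟨u, hq, _⟩ => hq, fun hq => ⟨owner q, hq, rfl⟩⟩
    have hsA : ∀ u, s u ⊆ A := fun u => Finset.filter_subset _ _
    refine ⟨s, ⟨fun u q hq => hval q (hsA u hq), ?_⟩, hbuilt⟩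
    intro u S' hAll hdev
    rcases hdev rfl with ⟨p, hp, rfl⟩ | ⟨p, hp, rfl⟩
    · -- adding an edge: not improving
      have hbsub : A ⊆ built (update s u (insert p (s u))) := by
        rw [← hbuilt]
        intro q hq
        obtain ⟨w, hw⟩ := mem_built.mp hq
        refine mem_built.mpr ⟨w, ?_⟩
        by_cases h : w = u
        · subst h; simp [update, Finset.mem_insert, hw]
        · simp [update, h, hw]
      have hfE : (H.terminals.filter fun t' =>
          ¬ Reaches (built (update s u (insert p (s u)))) u t') = ∅ :=
        Finset.filter_eq_empty_iff.mpr
          (fun t ht h => h (reaches_mono hbsub (hbuilt ▸ hA.1.2 u t ht)))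
      have hfE' : (H.terminals.filter fun t' => ¬ Reaches (built s) u t') = ∅ :=
        Finset.filter_eq_empty_iff.mpr (fun t ht h => h (hbuilt ▸ hA.1.2 u t ht))
      simp only [cost, update, if_pos rfl, eq_self_iff_true, if_true, hfE, hfE',
        Finset.card_empty, Nat.cast_zero, mul_zero, add_zero]
      intro hlt
      rw [Finset.card_insert_of_notMem hp] at hlt
      push_cast at hlt
      linarith
    · -- removing an edge: not improving
      have hpA : p ∈ A := (Finset.mem_filter.mp ((hs_def ▸ hp : p ∈ A.filter _))).1
      have howner : owner p = u := (Finset.mem_filter.mp ((hs_def ▸ hp : p ∈ A.filter _))).2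
      have hbsub : built (update s u ((s u).erase p)) ⊆ A.erase p := by
        intro q hq
        obtain ⟨w, hw⟩ := mem_built.mp hq
        by_cases h : w = u
        · rw [h] at hw
          simp only [update, if_pos rfl, eq_self_iff_true, if_true] at hw
          obtain ⟨hqp, hqs⟩ := Finset.mem_erase.mp hw
          exact Finset.mem_erase.mpr ⟨hqp, hsA u hqs⟩
        · simp only [update, if_neg h] at hw
          refine Finset.mem_erase.mpr ⟨?_, hsA w hw⟩
          rintro rfl
          have how : owner q = w := (Finset.mem_filter.mp ((hs_def ▸ hw : q ∈ A.filter _))).2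
          exact h (how.symm.trans howner)
      have hnreach : ¬ Reaches (built (update s u ((s u).erase p))) u (tw p) := by
        intro hr
        exact hnr p hpA (howner ▸ reaches_mono hbsub hr)
      have htwF : tw p ∈ H.terminals.filter fun t' =>
          ¬ Reaches (built (update s u ((s u).erase p))) u t' :=
        Finset.mem_filter.mpr ⟨htw p hpA, hnreach⟩
      have hk1 : 1 ≤ (H.terminals.filter fun t' =>
          ¬ Reaches (built (update s u ((s u).erase p))) u t').card :=
        Finset.card_pos.mpr ⟨tw p, htwF⟩
      have hfE' : (H.terminals.filter fun t' => ¬ Reaches (built s) u t') = ∅ :=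
        Finset.filter_eq_empty_iff.mpr (fun t ht h => h (hbuilt ▸ hA.1.2 u t ht))
      simp only [cost, update, if_pos rfl, eq_self_iff_true, if_true, hfE',
        Finset.card_empty, Nat.cast_zero, mul_zero, add_zero]
      have h1 : 1 ≤ (s u).card := Finset.card_pos.mpr ⟨p, hp⟩
      have hcS' : (((s u).erase p).card : ℝ) = (s u).card - 1 := by
        rw [Finset.card_erase_of_mem hp, Nat.cast_sub h1, Nat.cast_one]
      rw [hcS']
      have hk1R : (1:ℝ) ≤ ((H.terminals.filter fun t' =>
          ¬ Reaches (built (update s u ((s u).erase p))) u t').card : ℝ) := by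
        exact_mod_cast hk1
      nlinarith [hk1R, hCpos]

end TNCG
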